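/- For n odd, BBF_{n+1}^q equals the set of all matrices in ∪{ψ(T) : T ∈ BBF_n^q} minus the set ∪{φ(D) : D ∈ BBF_{(n+1)/2}^q}, where φ(D) is the set of (n+1) × (n+1) matrices whose two diagonal ((n+1)/2) × ((n+1)/2) blocks both equal D and whose off-diagonal blocks are arbitrary. -/

import Mathlib

def topLeft {α : Type*} {n : ℕ} (T : Matrix (Fin n) (Fin n) α) (r : ℕ) (h : r ≤ n) :
    Matrix (Fin r) (Fin r) α :=
  fun a b => T (Fin.castLE h a) (Fin.castLE h b)

def botRight {α : Type*} {n : ℕ} (T : Matrix (Fin n) (Fin n) α) (r : ℕ) (h : r ≤ n) :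
    Matrix (Fin r) (Fin r) α :=
  fun a b => T ⟨n - r + a, by have := a.isLt; omega⟩ ⟨n - r + b, by have := b.isLt; omega⟩

def BibifixFree {α : Type*} {n : ℕ} (T : Matrix (Fin n) (Fin n) α) : Prop :=
  ∀ (r : ℕ) (_ : 1 ≤ r) (h2 : r < n), topLeft T r h2.le ≠ botRight T r h2.le

def insIdx (n : ℕ) (i : Fin (n + 1)) (h : (i : ℕ) ≠ n / 2) : Fin n :=
  if hl : (i : ℕ) < n / 2 then ⟨i, by have := Nat.div_le_self n 2; omega⟩
  else ⟨(i : ℕ) - 1, by have := i.isLt; omega⟩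

def InPsi {α : Type*} {n : ℕ} (T : Matrix (Fin n) (Fin n) α)
    (T' : Matrix (Fin (n + 1)) (Fin (n + 1)) α) : Prop :=
  ∀ (i j : Fin (n + 1)) (hi : (i : ℕ) ≠ n / 2) (hj : (j : ℕ) ≠ n / 2),
    T' i j = T (insIdx n i hi) (insIdx n j hj)

/-- `M ∈ φ(D)`: the two diagonal `m × m` blocks of the `N × N` matrix `M` (where `N = 2m`)
both equal `D`, the other entries being arbitrary. -/
def InPhi {α : Type*} {m N : ℕ} (hN : 2 * m = N) (D : Matrix (Fin m) (Fin m) α)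
    (M : Matrix (Fin N) (Fin N) α) : Prop :=
  ∀ a b : Fin m,
    M ⟨a, by have := a.isLt; omega⟩ ⟨b, by have := b.isLt; omega⟩ = D a b ∧
    M ⟨m + a, by have := a.isLt; omega⟩ ⟨m + b, by have := b.isLt; omega⟩ = D a b

/-! A border of length `r` of a `k × k` matrix is an `r × r` top-left block equal to the
bottom-right one. If `r > k / 2` the two occurrences overlap in a border of length `2 r - k`, so
bibifix-freeness only has to be tested for borders of length at most `k / 2`. Deleting the middle
row and column of `M` (undoing `ψ`) leaves its top-left and bottom-right blocks of size `≤ n / 2`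
untouched, so these borders of `M` are exactly those of `T`. For `n + 1` even, the one remaining
length `(n + 1) / 2` is a border exactly when `M ∈ φ(D)` for its top-left block `D`; and when `D`
has a border, `M` has the same one, of length `< (n + 1) / 2`, already excluded through `T`. -/

variable {α : Type*}

def HasBorder {k : ℕ} (A : Matrix (Fin k) (Fin k) α) (r : ℕ) : Prop :=
  ∀ i j i' j' : Fin k, (i : ℕ) < r → (j : ℕ) < r →
    (i' : ℕ) = k - r + i → (j' : ℕ) = k - r + j → A i j = A i' j'

section Border

variable {k r : ℕ} {A : Matrix (Fin k) (Fin k) α}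

lemma hasBorder_iff_topLeft_eq_botRight (h : r ≤ k) :
    HasBorder A r ↔ topLeft A r h = botRight A r h := by
  refine ⟨fun H => funext₂ fun a b => H _ _ _ _ a.isLt b.isLt rfl rfl, fun H => ?_⟩
  intro i j i' j' hi hj hi' hj'
  convert congrFun (congrFun H ⟨i, hi⟩) ⟨j, hj⟩ using 1 <;>
    simp only [topLeft, botRight] <;> congr 1 <;> ext <;> simp [hi', hj']

lemma bibifixFree_iff : BibifixFree A ↔ ∀ r, 1 ≤ r → r < k → ¬ HasBorder A r := by
  refine forall_congr' fun r => forall_congr' fun _ => forall_congr' fun h => ?_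
  rw [hasBorder_iff_topLeft_eq_botRight h.le]

lemma HasBorder.shorten (H : HasBorder A r) (h : k < 2 * r) : HasBorder A (2 * r - k) := by
  intro i j i' j' hi hj hi' hj'
  exact (H i j ⟨k - r + i, by omega⟩ ⟨k - r + j, by omega⟩ (by omega) (by omega) rfl rfl).trans
    (H _ _ _ _ (by simp; omega) (by simp; omega) (by simp; omega) (by simp; omega))

lemma HasBorder.exists_two_mul_le (H : HasBorder A r) (h1 : 1 ≤ r) (h2 : r < k) :
    ∃ s, 1 ≤ s ∧ 2 * s ≤ k ∧ HasBorder A s := by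
  induction r using Nat.strong_induction_on with
  | _ r ih =>
    by_cases hr : 2 * r ≤ k
    · exact ⟨r, h1, hr, H⟩
    · exact ih (2 * r - k) (by omega) (H.shorten (by omega)) (by omega) (by omega)

lemma bibifixFree_iff_two_mul_le :
    BibifixFree A ↔ ∀ s, 1 ≤ s → 2 * s ≤ k → ¬ HasBorder A s := by
  rw [bibifixFree_iff]
  refine ⟨fun hA s h1 h2 => hA s h1 (by omega), fun hA r h1 h2 H => ?_⟩
  obtain ⟨s, hs1, hs2, hs⟩ := H.exists_two_mul_le h1 h2
  exact hA s hs1 hs2 hs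

lemma HasBorder.of_topLeft {u : ℕ} (H : HasBorder A r) (hr : r ≤ k)
    (hu : HasBorder (topLeft A r hr) u) (hur : u ≤ r) : HasBorder A u := by
  intro i j i' j' hi hj hi' hj'
  exact (hu ⟨i, by omega⟩ ⟨j, by omega⟩ ⟨r - u + i, by omega⟩ ⟨r - u + j, by omega⟩
    hi hj rfl rfl).trans (H _ _ _ _ (by simp; omega) (by simp; omega) (by simp; omega)
      (by simp; omega))

end Border

lemma inPhi_iff_hasBorder {m N : ℕ} (hN : 2 * m = N) {D : Matrix (Fin m) (Fin m) α}
    {M : Matrix (Fin N) (Fin N) α} :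
    InPhi hN D M ↔ HasBorder M m ∧ topLeft M m (by omega) = D := by
  refine ⟨fun H => ⟨?_, funext₂ fun a b => (H a b).1⟩, ?_⟩
  · intro i j i' j' hi hj hi' hj'
    rw [show i' = ⟨m + i, by omega⟩ from Fin.ext (by simp; omega),
      show j' = ⟨m + j, by omega⟩ from Fin.ext (by simp; omega)]
    exact (H ⟨i, hi⟩ ⟨j, hj⟩).1.trans (H ⟨i, hi⟩ ⟨j, hj⟩).2.symm
  · rintro ⟨H, rfl⟩ a b
    exact ⟨rfl, (H _ _ _ _ a.isLt b.isLt (by simp; omega) (by simp; omega)).symm⟩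

lemma val_succAbove {n : ℕ} (p : Fin (n + 1)) (a : Fin n) :
    (p.succAbove a : ℕ) = if (a : ℕ) < p then (a : ℕ) else a + 1 := by
  rw [Fin.succAbove]
  split_ifs <;> simp_all [Fin.lt_def]

lemma hasBorder_submatrix_succAbove_iff {n s : ℕ} {M : Matrix (Fin (n + 1)) (Fin (n + 1)) α}
    {p : Fin (n + 1)} (hs : s ≤ p) (hps : (p : ℕ) + s ≤ n) :
    HasBorder (M.submatrix p.succAbove p.succAbove) s ↔ HasBorder M s := by
  refine ⟨fun H i j i' j' hi hj hi' hj' => ?_, fun H a b a' b' ha hb ha' hb' => ?_⟩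
  · obtain ⟨a, rfl⟩ := Fin.exists_succAbove_eq (y := p) (x := i) (Fin.ne_of_val_ne (by omega))
    obtain ⟨b, rfl⟩ := Fin.exists_succAbove_eq (y := p) (x := j) (Fin.ne_of_val_ne (by omega))
    obtain ⟨a', rfl⟩ := Fin.exists_succAbove_eq (y := p) (x := i') (Fin.ne_of_val_ne (by omega))
    obtain ⟨b', rfl⟩ := Fin.exists_succAbove_eq (y := p) (x := j') (Fin.ne_of_val_ne (by omega))
    simp only [val_succAbove] at hi hj hi' hj'
    exact H a b a' b' (by split_ifs at hi <;> omega) (by split_ifs at hj <;> omega)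
      (by split_ifs at hi hi' <;> omega) (by split_ifs at hj hj' <;> omega)
  · exact H _ _ _ _ (by rw [val_succAbove]; split_ifs <;> omega)
      (by rw [val_succAbove]; split_ifs <;> omega)
      (by simp only [val_succAbove]; split_ifs <;> omega)
      (by simp only [val_succAbove]; split_ifs <;> omega)

lemma succAbove_insIdx {n : ℕ} (i : Fin (n + 1)) (hi : (i : ℕ) ≠ n / 2) :
    (⟨n / 2, by omega⟩ : Fin (n + 1)).succAbove (insIdx n i hi) = i := by
  ext
  rw [val_succAbove, insIdx]
  split_ifs <;> simp_all <;> omega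

lemma inPsi_iff_eq_submatrix {n : ℕ} {T : Matrix (Fin n) (Fin n) α}
    {M : Matrix (Fin (n + 1)) (Fin (n + 1)) α} :
    InPsi T M ↔ T = M.submatrix (⟨n / 2, by omega⟩ : Fin (n + 1)).succAbove
      (⟨n / 2, by omega⟩ : Fin (n + 1)).succAbove := by
  have hne (a : Fin n) : ((⟨n / 2, by omega⟩ : Fin (n + 1)).succAbove a : ℕ) ≠ n / 2 :=
    fun h => Fin.succAbove_ne _ a (Fin.ext h)
  refine ⟨fun H => ?_, fun H i j hi hj => by rw [H, Matrix.submatrix_apply, succAbove_insIdx,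
    succAbove_insIdx]⟩
  ext a b
  rw [Matrix.submatrix_apply, H _ _ (hne a) (hne b)]
  congr 1 <;> exact (Fin.succAbove_right_injective (succAbove_insIdx _ _)).symm

theorem stmt_8 {q n : ℕ} (hn : n % 2 = 1) (M : Matrix (Fin (n + 1)) (Fin (n + 1)) (Fin q)) :
    BibifixFree M ↔
      (∃ T : Matrix (Fin n) (Fin n) (Fin q), BibifixFree T ∧ InPsi T M) ∧
      ¬ ∃ D : Matrix (Fin ((n + 1) / 2)) (Fin ((n + 1) / 2)) (Fin q),
          BibifixFree D ∧ InPhi (by omega) D M := by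
  have hborder (s : ℕ) (hs : s ≤ n / 2) :
      HasBorder (M.submatrix (⟨n / 2, by omega⟩ : Fin (n + 1)).succAbove
        (⟨n / 2, by omega⟩ : Fin (n + 1)).succAbove) s ↔ HasBorder M s :=
    hasBorder_submatrix_succAbove_iff hs (by simp only; omega)
  simp only [inPsi_iff_eq_submatrix, exists_eq_right, inPhi_iff_hasBorder]
  refine ⟨fun hM => ⟨?_, ?_⟩, fun ⟨hT, hD⟩ => ?_⟩
  · rw [bibifixFree_iff_two_mul_le] at hM ⊢
    exact fun s hs1 hs2 hs => hM s hs1 (by omega) ((hborder s (by omega)).1 hs)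
  · rintro ⟨D, -, hD, -⟩
    exact (bibifixFree_iff.1 hM) _ (by omega) (by omega) hD
  rw [bibifixFree_iff_two_mul_le] at hT ⊢
  intro s hs1 hs2 hs
  obtain hs' | rfl : s ≤ n / 2 ∨ s = (n + 1) / 2 := by omega
  · exact hT s hs1 (by omega) ((hborder s hs').2 hs)
  obtain ⟨u, hu1, hu, hDu⟩ : ∃ u, 1 ≤ u ∧ u < (n + 1) / 2 ∧ HasBorder (topLeft M _ _) u := by
    by_contra! h
    exact hD ⟨_, bibifixFree_iff.2 h, hs, rfl⟩
  exact hT u hu1 (by omega) ((hborder u (by omega)).2 (hs.of_topLeft _ hDu hu.le))
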